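/- Let n ≥ 3 and define F(x₁,…,xₙ) = (x₁ + 2x₂ + 3x₃ + … + n·xₙ)/(x₁ + … + xₙ) on the set where x₁ + … + xₙ ≠ 0. Then F is irreducible on every nonempty connected open subset U of this set: for every permutation σ of {1,…,n} and every k with 2 ≤ k ≤ n−1, there exist no C² functions h of k variables and g of n−k+1 variables such that F(x₁,…,xₙ) = g(h(x_{σ(1)},…,x_{σ(k)}), x_{σ(k+1)},…,x_{σ(n)}) for all x ∈ U. -/

import Mathlib

/-!
Read `F x` as the centre of mass of the points `cᵢ = i` with masses `xᵢ`; its derivative in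
the direction of the `i`-th mass is `(cᵢ - F x) / ∑ xⱼ`. If `F = g(h(x_A), x_B)` near a point,
the derivatives of `F` in two coordinates `a, b ∈ A` are `∂ₐh · ∂₁g` and `∂_b h · ∂₁g`, so their
ratio `(c_a - F) : (c_b - F)` does not change when a coordinate `m ∈ B` is moved. Since
`c_a ≠ c_b`, moving `m` leaves `F` unchanged, and this forces `F = c_m` on all of `U`. But moving
the mass `a` instead leaves `F` unchanged only if `F = c_a ≠ c_m`.
-/

open Filter Topology Finset

theorem IsOpen.exists_ne_zero_add_smul_mem {𝕜 E : Type*} [NontriviallyNormedField 𝕜]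
    [AddCommGroup E] [Module 𝕜 E] [TopologicalSpace E] [ContinuousAdd E] [ContinuousSMul 𝕜 E]
    {U : Set E} (hU : IsOpen U) {q : E} (hq : q ∈ U) (v : E) :
    ∃ u : 𝕜, u ≠ 0 ∧ q + u • v ∈ U := by
  have hline : ∀ᶠ t : 𝕜 in 𝓝[≠] 0, q + t • v ∈ U := by
    refine nhdsWithin_le_nhds ?_
    have hcont : Continuous fun t : 𝕜 => q + t • v := by fun_prop
    exact hcont.continuousAt.preimage_mem_nhds (by simpa using hU.mem_nhds hq)
  obtain ⟨t, ht, ht0⟩ := (hline.and self_mem_nhdsWithin).exists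
  exact ⟨t, ht0, ht⟩

theorem LinearMap.funLeft_single_eq_zero {R M α β : Type*} [Semiring R] [AddCommMonoid M]
    [Module R M] [DecidableEq β] {f : α → β} {i : β} (hi : ∀ j, f j ≠ i) (x : M) :
    LinearMap.funLeft R M f (Pi.single i x) = 0 := by
  ext j
  exact Pi.single_eq_of_ne (M := fun _ => M) (hi j) x

section LineDerivFactorization

variable {𝕜 E G : Type*} [NontriviallyNormedField 𝕜] [NormedAddCommGroup E] [NormedSpace 𝕜 E]
  [NormedAddCommGroup G] [NormedSpace 𝕜 G] {h : E → 𝕜} {g : 𝕜 × G → 𝕜}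

theorem hasLineDerivAt_comp_prodMap_id {p d : E × G} (hh : DifferentiableAt 𝕜 h p.1)
    (hg : DifferentiableAt 𝕜 g (h p.1, p.2)) (hd : d.2 = 0) :
    HasLineDerivAt 𝕜 (g ∘ Prod.map h id)
      (fderiv 𝕜 h p.1 d.1 * fderiv 𝕜 g (h p.1, p.2) (1, 0)) p d := by
  have hinner : HasFDerivAt (Prod.map h id)
      ((fderiv 𝕜 h p.1).prodMap (ContinuousLinearMap.id 𝕜 G)) p :=
    HasFDerivAt.prodMap p hh.hasFDerivAt (hasFDerivAt_id p.2)
  refine ((hg.hasFDerivAt.comp p hinner).hasLineDerivAt d).congr_deriv ?_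
  obtain ⟨d₁, d₂⟩ := d
  simp only at hd
  subst hd
  have hdir : ((fderiv 𝕜 h p.1 d₁, 0) : 𝕜 × G) = fderiv 𝕜 h p.1 d₁ • (1, 0) := by simp
  simp only [ContinuousLinearMap.comp_apply, ContinuousLinearMap.coe_prodMap', Prod.map_apply,
    ContinuousLinearMap.id_apply, hdir, map_smul, smul_eq_mul]

theorem mul_eq_mul_of_hasLineDerivAt_comp_prodMap_id (hh : Differentiable 𝕜 h)
    (hg : Differentiable 𝕜 g) {p p' d₀ d₁ : E × G} {A B A' B' : 𝕜} (hpp' : p.1 = p'.1)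
    (hd₀ : d₀.2 = 0) (hd₁ : d₁.2 = 0)
    (hA : HasLineDerivAt 𝕜 (g ∘ Prod.map h id) A p d₀)
    (hB : HasLineDerivAt 𝕜 (g ∘ Prod.map h id) B p d₁)
    (hA' : HasLineDerivAt 𝕜 (g ∘ Prod.map h id) A' p' d₀)
    (hB' : HasLineDerivAt 𝕜 (g ∘ Prod.map h id) B' p' d₁) :
    A * B' = B * A' := by
  have key {p d : E × G} {D : 𝕜} (hd : d.2 = 0) (hD : HasLineDerivAt 𝕜 (g ∘ Prod.map h id) D p d) :
      D = fderiv 𝕜 h p.1 d.1 * fderiv 𝕜 g (h p.1, p.2) (1, 0) :=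
    hD.unique (hasLineDerivAt_comp_prodMap_id hh.differentiableAt hg.differentiableAt hd)
  rw [key hd₀ hA, key hd₁ hB, key hd₀ hA', key hd₁ hB', ← hpp']
  ring

end LineDerivFactorization

section CenterMass

variable {ι : Type*} [Fintype ι] (c q : ι → ℝ)

theorem centerMass_univ_eq_div : univ.centerMass q c = (∑ j, q j * c j) / ∑ j, q j := by
  rw [Finset.centerMass, smul_eq_mul, inv_mul_eq_div]
  rfl

variable [DecidableEq ι] (i : ι)

theorem sum_add_smul_single (t : ℝ) : ∑ j, (q + t • Pi.single i 1 : ι → ℝ) j = ∑ j, q j + t := by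
  simp [sum_add_distrib, Pi.single_apply]

theorem centerMass_add_smul_single (t : ℝ) :
    univ.centerMass (q + t • Pi.single i 1) c = (∑ j, q j * c j + t * c i) / (∑ j, q j + t) := by
  rw [centerMass_univ_eq_div, sum_add_smul_single]
  simp [add_mul, sum_add_distrib, Pi.single_apply]

theorem hasLineDerivAt_centerMass_single (hq : ∑ j, q j ≠ 0) :
    HasLineDerivAt ℝ (fun w => univ.centerMass w c)
      ((c i - univ.centerMass q c) / ∑ j, q j) q (Pi.single i 1) := by
  show HasDerivAt (fun t : ℝ => univ.centerMass (q + t • Pi.single i 1) c) _ 0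
  simp_rw [centerMass_add_smul_single]
  have hnum : HasDerivAt (fun t : ℝ => ∑ j, q j * c j + t * c i) (c i) 0 := by
    simpa using ((hasDerivAt_id (0 : ℝ)).mul_const (c i)).const_add (∑ j, q j * c j)
  have hden : HasDerivAt (fun t : ℝ => ∑ j, q j + t) 1 0 := by
    simpa using (hasDerivAt_id (0 : ℝ)).const_add (∑ j, q j)
  refine (hnum.div hden (by simpa using hq)).congr_deriv ?_
  rw [centerMass_univ_eq_div]
  simp only [add_zero, zero_mul, mul_one]
  field_simp

theorem centerMass_eq_of_centerMass_add_smul_single_eq {u : ℝ} (hu : u ≠ 0)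
    (hq : ∑ j, q j ≠ 0) (hq' : ∑ j, (q + u • Pi.single i 1 : ι → ℝ) j ≠ 0)
    (h : univ.centerMass (q + u • Pi.single i 1) c = univ.centerMass q c) :
    univ.centerMass q c = c i := by
  rw [sum_add_smul_single] at hq'
  rw [centerMass_add_smul_single, centerMass_univ_eq_div] at h
  rw [centerMass_univ_eq_div, div_eq_iff hq]
  field_simp at h
  exact mul_left_cancel₀ hu (by linear_combination -h)

end CenterMass

section Factorization

variable {ι E G : Type*} [Fintype ι] [DecidableEq ι] [NormedAddCommGroup E] [NormedSpace ℝ E]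
  [NormedAddCommGroup G] [NormedSpace ℝ G] {h : E → ℝ} {g : ℝ × G → ℝ}

theorem centerMass_add_smul_single_eq_of_eventuallyEq_comp (hh : Differentiable ℝ h)
    (hg : Differentiable ℝ g) (L : (ι → ℝ) →ₗ[ℝ] E × G) (c : ι → ℝ) {a b m : ι}
    (hab : c a ≠ c b) (ha : (L (Pi.single a 1)).2 = 0) (hb : (L (Pi.single b 1)).2 = 0)
    (hm : (L (Pi.single m 1)).1 = 0) {q : ι → ℝ} {u : ℝ} (hq : ∑ j, q j ≠ 0)
    (hq' : ∑ j, (q + u • Pi.single m 1 : ι → ℝ) j ≠ 0)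
    (hFq : (fun w => univ.centerMass w c) =ᶠ[𝓝 q] (g ∘ Prod.map h id) ∘ L)
    (hFq' : (fun w => univ.centerMass w c) =ᶠ[𝓝 (q + u • Pi.single m 1)]
      (g ∘ Prod.map h id) ∘ L) :
    univ.centerMass (q + u • Pi.single m 1) c = univ.centerMass q c := by
  have transfer {r : ι → ℝ} (hr : ∑ j, r j ≠ 0)
      (hFr : (fun w => univ.centerMass w c) =ᶠ[𝓝 r] (g ∘ Prod.map h id) ∘ L) (i : ι) :
      HasLineDerivAt ℝ (g ∘ Prod.map h id) ((c i - univ.centerMass r c) / ∑ j, r j)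
        (L r) (L (Pi.single i 1)) :=
    ((hasLineDerivAt_centerMass_single c r i hr).congr_of_eventuallyEq hFr.symm).of_comp
  have hfst : (L q).1 = (L (q + u • Pi.single m 1)).1 := by simp [hm]
  have hcross := mul_eq_mul_of_hasLineDerivAt_comp_prodMap_id hh hg hfst ha hb
    (transfer hq hFq a) (transfer hq hFq b) (transfer hq' hFq' a) (transfer hq' hFq' b)
  field_simp at hcross
  exact mul_left_cancel₀ (sub_ne_zero.2 hab) (by linear_combination -hcross)

end Factorization

section PermSplit

variable {n k : ℕ}

def permSplit (σ : Equiv.Perm (Fin n)) (hk : k ≤ n) :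
    (Fin n → ℝ) →ₗ[ℝ] (Fin k → ℝ) × (Fin (n - k) → ℝ) :=
  (LinearMap.funLeft ℝ ℝ fun i => σ (Fin.castLE hk i)).prod
    (LinearMap.funLeft ℝ ℝ fun j => σ ⟨k + j.1, by have := j.2; omega⟩)

theorem Equiv.Perm.apply_castLE_ne_apply_add (σ : Equiv.Perm (Fin n)) (hk : k ≤ n) (i : Fin k)
    (j : Fin (n - k)) : σ (Fin.castLE hk i) ≠ σ ⟨k + j.1, by have := j.2; omega⟩ := by
  rw [σ.injective.ne_iff, Ne, Fin.ext_iff]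
  simp only [Fin.val_castLE]
  omega

theorem permSplit_single_castLE_snd (σ : Equiv.Perm (Fin n)) (hk : k ≤ n) (i : Fin k) :
    (permSplit σ hk (Pi.single (σ (Fin.castLE hk i)) 1)).2 = 0 :=
  LinearMap.funLeft_single_eq_zero (fun j => (σ.apply_castLE_ne_apply_add hk i j).symm) 1

theorem permSplit_single_add_fst (σ : Equiv.Perm (Fin n)) (hk : k ≤ n) (j : Fin (n - k)) :
    (permSplit σ hk (Pi.single (σ ⟨k + j.1, by have := j.2; omega⟩) 1)).1 = 0 :=
  LinearMap.funLeft_single_eq_zero (fun i => σ.apply_castLE_ne_apply_add hk i j) 1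

end PermSplit

/-- The `n`-quasigroup
`F(x) = (x₁ + 2x₂ + … + n·xₙ)/(x₁ + … + xₙ)` is irreducible on every nonempty
connected open subset of `{x : x₁ + … + xₙ ≠ 0}`: for every permutation `σ` and
every `k` with `2 ≤ k ≤ n−1` there is no decomposition
`F(x) = g(h(x_{σ(1)},…,x_{σ(k)}), x_{σ(k+1)},…,x_{σ(n)})` with C² `g`, `h`. -/
theorem stmt_8 (n : ℕ)
    (F : (Fin n → ℝ) → ℝ)
    (hF : ∀ x, F x = (∑ i : Fin n, ((i.1 + 1 : ℕ) : ℝ) * x i) / (∑ i, x i))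
    (U : Set (Fin n → ℝ)) (hUopen : IsOpen U) (hUconn : IsConnected U)
    (hden : ∀ x ∈ U, (∑ i, x i) ≠ 0) :
    ∀ (σ : Equiv.Perm (Fin n)) (k : ℕ) (hk2 : 2 ≤ k) (hkn : k ≤ n - 1),
      ¬ ∃ (h : (Fin k → ℝ) → ℝ) (g : ℝ × (Fin (n - k) → ℝ) → ℝ),
          ContDiff ℝ 2 h ∧ ContDiff ℝ 2 g ∧
          ∀ x ∈ U, F x = g (h (fun i => x (σ (Fin.castLE (by omega) i))),
            fun j => x (σ ⟨k + j.1, by have := j.2; omega⟩)) := by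
  rintro σ k hk2 hkn ⟨h, g, hh, hg, hfac⟩
  have hk : k ≤ n := by omega
  set c : Fin n → ℝ := fun i => ((i.1 + 1 : ℕ) : ℝ)
  have hc : Function.Injective c := fun i j hij => Fin.ext (by simpa [c] using hij)
  have hloc (x) (hx : x ∈ U) :
      (fun w => univ.centerMass w c) =ᶠ[𝓝 x] (g ∘ Prod.map h id) ∘ permSplit σ hk := by
    filter_upwards [hUopen.mem_nhds hx] with y hy
    rw [centerMass_univ_eq_div, sum_congr rfl fun i _ => mul_comm (y i) (c i), ← hF, hfac y hy]
    rfl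
  set a := σ (Fin.castLE hk ⟨0, by omega⟩)
  set m := σ ⟨k + 0, by omega⟩
  have hconst (q) (hq : q ∈ U) : univ.centerMass q c = c m := by
    obtain ⟨u, hu, hq'⟩ := hUopen.exists_ne_zero_add_smul_mem (𝕜 := ℝ) hq (Pi.single m 1)
    refine centerMass_eq_of_centerMass_add_smul_single_eq c q m hu (hden q hq) (hden _ hq') ?_
    refine centerMass_add_smul_single_eq_of_eventuallyEq_comp
      (hh.differentiable (by norm_num)) (hg.differentiable (by norm_num)) _ c (hc.ne ?_)
      (permSplit_single_castLE_snd σ hk ⟨0, by omega⟩)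
      (permSplit_single_castLE_snd σ hk ⟨1, by omega⟩)
      (permSplit_single_add_fst σ hk ⟨0, by omega⟩) (hden q hq) (hden _ hq')
      (hloc q hq) (hloc _ hq')
    simp [Fin.ext_iff]
  obtain ⟨q, hq⟩ := hUconn.nonempty
  obtain ⟨u, hu, hq'⟩ := hUopen.exists_ne_zero_add_smul_mem (𝕜 := ℝ) hq (Pi.single a 1)
  have hca : univ.centerMass q c = c a :=
    centerMass_eq_of_centerMass_add_smul_single_eq c q a hu (hden q hq) (hden _ hq')
      ((hconst _ hq').trans (hconst q hq).symm)
  exact hc.ne (σ.apply_castLE_ne_apply_add hk _ ⟨0, by omega⟩)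
    (hca.symm.trans (hconst q hq))
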